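/- Let n ∈ ℕ and g, h : Fin n → ℕ with g i ≤ h i for every i, and let Q be a subset of the box ∀ i, Fin (h i). Then Q has a g-cover (a family b with b i : Fin (g i) → Fin (h i) such that every q ∈ Q satisfies q i = b i j for some i and j) if and only if the complement of Q in the box contains a combinatorial prism of measurements (fun i => h i − g i). -/

import Mathlib

/-!
A `g`-cover `b` covers `Q` exactly when `Q` misses the prism `∏ i, (range (b i))ᶜ`. Each
`range (b i)` has at most `g i` elements, so its complement contains a set of size `h i - g i`;
conversely the complement of a prism side `Z i` of size `h i - g i` has exactly `g i` elements
and is the range of some `Fin (g i) → Fin (h i)`.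
-/

open Finset

theorem Finset.exists_range_eq_of_card_eq {α : Type*} {s : Finset α} {k : ℕ} (hs : #s = k) :
    ∃ b : Fin k → α, Set.range b = s :=
  ⟨fun j => (s.equivFinOfCardEq hs).symm j, by
    ext x
    refine ⟨?_, fun hx => ⟨s.equivFinOfCardEq hs ⟨x, hx⟩, by simp⟩⟩
    rintro ⟨j, rfl⟩
    exact Subtype.prop _⟩

theorem exists_card_eq_card_sub_disjoint_range {α : Type*} [Fintype α] [DecidableEq α] {k : ℕ}
    (b : Fin k → α) : ∃ Z : Finset α, #Z = Fintype.card α - k ∧ ∀ j, b j ∉ Z := by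
  have hcard : Fintype.card α - k ≤ #(univ.image b)ᶜ := by
    have := card_image_le (s := univ) (f := b)
    rw [card_compl]
    simp only [card_univ, Fintype.card_fin] at this
    omega
  obtain ⟨Z, hZ, hZcard⟩ := exists_subset_card_eq hcard
  exact ⟨Z, hZcard, fun j hj => mem_compl.1 (hZ hj) (mem_image_of_mem b (mem_univ j))⟩

theorem cover_iff_complement_prism (n : ℕ) (g h : Fin n → ℕ)
    (hgh : ∀ i, g i ≤ h i) (Q : Set (∀ i : Fin n, Fin (h i))) :
    (∃ b : ∀ i : Fin n, Fin (g i) → Fin (h i),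
        ∀ q ∈ Q, ∃ (i : Fin n) (j : Fin (g i)), q i = b i j) ↔
      ∃ Z : ∀ i : Fin n, Finset (Fin (h i)),
        (∀ i, (Z i).card = h i - g i) ∧
        ∀ q : ∀ i : Fin n, Fin (h i), (∀ i, q i ∈ Z i) → q ∉ Q := by
  constructor
  · rintro ⟨b, hb⟩
    choose Z hZcard hZ using fun i => exists_card_eq_card_sub_disjoint_range (b i)
    refine ⟨Z, fun i => by simpa using hZcard i, fun q hqZ hqQ => ?_⟩
    obtain ⟨i, j, hij⟩ := hb q hqQ
    exact hZ i j (hij ▸ hqZ i)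
  · rintro ⟨Z, hZcard, hZ⟩
    have hcompl : ∀ i, #(Z i)ᶜ = g i := fun i => by
      rw [card_compl, hZcard, Fintype.card_fin]
      have := hgh i
      omega
    choose b hb using fun i => Finset.exists_range_eq_of_card_eq (hcompl i)
    refine ⟨b, fun q hqQ => ?_⟩
    by_contra! hmiss
    refine hZ q (fun i => ?_) hqQ
    have : q i ∉ Set.range (b i) := fun ⟨j, hj⟩ => hmiss i j hj.symm
    simpa [hb] using this
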